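/- For LRRW with parameter a on a graph G, the probability of a finite path γ starting at x₀ factors as follows: for each undirected edge e traversed q times by γ, the numerators contribute the product a(a+1)⋯(a+q−1); and for each vertex v ≠ x₀ appearing r times among γ_0,…,γ_{l−1}, the denominators contribute the product (a·deg v + 1)(a·deg v + 3)⋯(a·deg v + 2r−1), while x₀ appearing r times contributes (a·deg x₀)(a·deg x₀ + 2)⋯(a·deg x₀ + 2r−2). Hence p(γ) is determined by the traversal counts N_γ(e,l) alone. -/

import Mathlib

/-- `ntrav γ t e` is the number of traversals `N(e,t)` of the undirected edge
`e` by the walk `γ` during the first `t` steps, counting both directions. -/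
def ntrav {V : Type*} [DecidableEq V] (γ : ℕ → V) (t : ℕ) (e : Sym2 V) : ℕ :=
  ((Finset.range t).filter (fun s => s(γ s, γ (s+1)) = e)).card

/-- The probability that the reinforced random walk with reinforcement
function `f` on the locally finite graph `G` begins with the first `l` steps
of the walk `γ`: the product over each step of
`f(N((γ_i,γ_{i+1}),i))` normalized over the neighbours of `γ_i`. -/
noncomputable def pathProb {V : Type*} [DecidableEq V] (G : SimpleGraph V)
    [∀ v : V, Fintype (G.neighborSet v)] (f : ℕ → ℝ) (γ : ℕ → V) (l : ℕ) : ℝ :=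
  ∏ i ∈ Finset.range l,
    f (ntrav γ i s(γ i, γ (i+1))) /
      ∑ z ∈ G.neighborFinset (γ i), f (ntrav γ i s(γ i, z))

/-!
Group the factors of `p(γ)` by the edge traversed (numerators) and by the vertex left
(denominators). If step `i` is the `k`-th departure from `v`, every earlier visit to `v`
has contributed one traversal into `v` and one out of it, and the current visit one
traversal into `v`, except that the walk starts at `x₀` without entering it. So the weights
at `v` sum to `a·deg v + 2k` for `v = x₀` and to `a·deg v + 2k + 1` otherwise.
-/

open Finset

lemma card_filter_range_add_one (p : ℕ → Prop) [DecidablePred p] (n : ℕ) :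
    #{i ∈ range (n + 1) | p i} = #{i ∈ range n | p i} + if p n then 1 else 0 := by
  simp only [← Nat.count_eq_card_filter_range, Nat.count_succ]

lemma prod_range_eq_prod_image_prod_range_card {α M : Type*} [DecidableEq α] [CommMonoid M]
    (g : ℕ → α) (F : α → ℕ → M) (l : ℕ) :
    ∏ i ∈ range l, F (g i) #{s ∈ range i | g s = g i}
      = ∏ x ∈ (range l).image g, ∏ j ∈ range #{i ∈ range l | g i = x}, F x j := by
  induction l with
  | zero => simp
  | succ l ih =>
    have extend : ∏ x ∈ (range l).image g, ∏ j ∈ range #{i ∈ range l | g i = x}, F x j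
        = ∏ x ∈ (range (l + 1)).image g, ∏ j ∈ range #{i ∈ range l | g i = x}, F x j := by
      refine prod_subset (image_subset_image (range_subset_range.2 l.le_succ)) fun x _ hx => ?_
      have : #{i ∈ range l | g i = x} = 0 :=
        card_eq_zero.2 <| filter_eq_empty_iff.2 fun i hi hix => hx (hix ▸ mem_image_of_mem g hi)
      simp [this]
    have split_last : ∀ x, ∏ j ∈ range #{i ∈ range (l + 1) | g i = x}, F x j
        = (∏ j ∈ range #{i ∈ range l | g i = x}, F x j)
          * if g l = x then F x #{i ∈ range l | g i = x} else 1 := by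
      intro x
      rw [card_filter_range_add_one]
      split_ifs <;> simp [prod_range_succ]
    rw [prod_range_succ, ih, extend, prod_congr rfl fun x _ => split_last x, prod_mul_distrib,
      prod_ite_eq, if_pos (mem_image_of_mem g (self_mem_range_succ l))]

lemma card_arrivals_add_ite_eq {V : Type*} [DecidableEq V] (γ : ℕ → V) (v : V) (i : ℕ) :
    #{s ∈ range i | γ (s + 1) = v} + (if γ 0 = v then 1 else 0)
      = #{s ∈ range i | γ s = v} + if γ i = v then 1 else 0 := by
  induction i with
  | zero => simp
  | succ i ih =>
    rw [card_filter_range_add_one, card_filter_range_add_one]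
    split_ifs at ih ⊢ <;> omega

lemma SimpleGraph.sum_neighborFinset_ite_sym2_eq {V : Type*} [DecidableEq V] (G : SimpleGraph V)
    [∀ v : V, Fintype (G.neighborSet v)] {x y : V} (hxy : G.Adj x y) (v : V) :
    ∑ z ∈ G.neighborFinset v, (if s(x, y) = s(v, z) then 1 else 0 : ℕ)
      = (if x = v then 1 else 0) + if y = v then 1 else 0 := by
  rcases eq_or_ne x v with rfl | hxv
  · simp [hxy, hxy.ne.symm]
  rcases eq_or_ne y v with rfl | hyv
  · simp [Sym2.eq_swap (a := x), hxy.symm, hxv]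
  · simp [hxv, hyv]

lemma sum_ntrav_neighborFinset {V : Type*} [DecidableEq V] (G : SimpleGraph V)
    [∀ v : V, Fintype (G.neighborSet v)] {γ : ℕ → V} {i : ℕ}
    (hadj : ∀ s < i, G.Adj (γ s) (γ (s + 1))) (v : V) :
    ∑ z ∈ G.neighborFinset v, ntrav γ i s(v, z)
      = #{s ∈ range i | γ s = v} + #{s ∈ range i | γ (s + 1) = v} := by
  simp only [ntrav, card_filter]
  rw [sum_comm, ← sum_add_distrib]
  exact sum_congr rfl fun s hs =>
    G.sum_neighborFinset_ite_sym2_eq (hadj s (mem_range.1 hs)) v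

lemma sum_ntrav_neighborFinset_self {V : Type*} [DecidableEq V] (G : SimpleGraph V)
    [∀ v : V, Fintype (G.neighborSet v)] {γ : ℕ → V} {i : ℕ}
    (hadj : ∀ s < i, G.Adj (γ s) (γ (s + 1))) :
    ∑ z ∈ G.neighborFinset (γ i), ntrav γ i s(γ i, z)
      = 2 * #{s ∈ range i | γ s = γ i} + if γ i = γ 0 then 0 else 1 := by
  have shift := card_arrivals_add_ite_eq γ (γ i) i
  rw [sum_ntrav_neighborFinset G hadj]
  split_ifs at shift ⊢ <;> grind

/-- Explicit product formula for the probability of a path `γ` of length `l`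
under LRRW with parameter `a`: each undirected edge `e` traversed `q` times
contributes numerators `a(a+1)⋯(a+q-1)`; each vertex `v ≠ x₀` appearing `r`
times among `γ_0,…,γ_{l-1}` contributes denominators
`(a·deg v + 1)(a·deg v + 3)⋯(a·deg v + 2r - 1)`, while `x₀` appearing `r`
times contributes `(a·deg x₀)(a·deg x₀ + 2)⋯(a·deg x₀ + 2r - 2)`.
Hence `p(γ)` is determined by the traversal counts alone. -/
theorem lrrw_path_probability_formula {V : Type*} [DecidableEq V]
    (G : SimpleGraph V) [∀ v : V, Fintype (G.neighborSet v)]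
    (a : ℝ) (ha : 0 < a) (x₀ : V) (γ : ℕ → V) (l : ℕ)
    (h0 : γ 0 = x₀)
    (hadj : ∀ i < l, G.Adj (γ i) (γ (i+1))) :
    pathProb G (fun n => a + (n : ℝ)) γ l
      = (∏ e ∈ (Finset.range l).image (fun i => s(γ i, γ (i+1))),
            ∏ j ∈ Finset.range (ntrav γ l e), (a + (j : ℝ)))
        / ∏ v ∈ (Finset.range l).image γ,
            (if v = x₀ then
              ∏ j ∈ Finset.range (((Finset.range l).filter (fun i => γ i = v)).card),
                (a * (G.degree v : ℝ) + 2 * (j : ℝ))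
            else
              ∏ j ∈ Finset.range (((Finset.range l).filter (fun i => γ i = v)).card),
                (a * (G.degree v : ℝ) + 2 * (j : ℝ) + 1)) := by
  subst h0
  have denominator : ∀ i ∈ range l,
      ∑ z ∈ G.neighborFinset (γ i), (a + (ntrav γ i s(γ i, z) : ℝ))
        = a * G.degree (γ i) + 2 * #{s ∈ range i | γ s = γ i}
          + if γ i = γ 0 then 0 else 1 := by
    intro i hi
    have hadj_i : ∀ s < i, G.Adj (γ s) (γ (s + 1)) := fun s hs =>
      hadj s (hs.trans (mem_range.1 hi))
    rw [sum_add_distrib, sum_const, nsmul_eq_mul, ← Nat.cast_sum,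
      sum_ntrav_neighborFinset_self G hadj_i, G.card_neighborFinset_eq_degree]
    split_ifs <;> push_cast <;> ring
  rw [pathProb, prod_div_distrib, prod_congr rfl denominator]
  congr 1
  · exact prod_range_eq_prod_image_prod_range_card (fun i => s(γ i, γ (i + 1)))
      (fun _ n => a + n) l
  · rw [prod_range_eq_prod_image_prod_range_card γ
      (fun v k => a * G.degree v + 2 * k + if v = γ 0 then 0 else 1)]
    exact prod_congr rfl fun v _ => by split_ifs <;> simp
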